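/- For every integer k ≥ 0 there exists N such that the following holds. Let t = 12k+4, let ℓ0 ≥ 1 be an integer, and let n = 6(3k+1)ℓ0 + 16k² − k − 1 with n ≥ N. For ℓ ∈ {ℓ0−1, ℓ0} set G_ℓ = K_1 ∨ (ℓ·K_t ∪ (n−1−ℓt)·P_1). Then S(G_{ℓ0}) = S(G_{ℓ0−1}). -/

import Mathlib

open Finset SimpleGraph Matrix

attribute [local instance] Classical.propDecidable

/-- `H` is a minor of `G`: there is a family of nonempty, pairwise disjoint, connected
branch sets in `G`, one for each vertex of `H`, such that adjacent vertices of `H`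
have an edge of `G` between their branch sets. -/
def SimpleGraph.IsMinorOf {W V : Type*} (H : SimpleGraph W) (G : SimpleGraph V) : Prop :=
  ∃ φ : W → Set V,
    (∀ w, (φ w).Nonempty) ∧
    (∀ w, (G.induce (φ w)).Connected) ∧
    (Pairwise fun w₁ w₂ => Disjoint (φ w₁) (φ w₂)) ∧
    ∀ ⦃w₁ w₂⦄, H.Adj w₁ w₂ → ∃ v₁ ∈ φ w₁, ∃ v₂ ∈ φ w₂, G.Adj v₁ v₂

/-- `G` has no `K_{2,t}` minor. -/
def K2tMinorFree (t : ℕ) {V : Type*} (G : SimpleGraph V) : Prop :=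
  ¬ (completeBipartiteGraph (Fin 2) (Fin t)).IsMinorOf G

/-- The real adjacency matrix of a graph. -/
noncomputable def adjMat {V : Type*} [Fintype V] (G : SimpleGraph V) : Matrix V V ℝ :=
  fun u v => if G.Adj u v then 1 else 0

/-- The largest adjacency eigenvalue. -/
noncomputable def lamMax {V : Type*} [Fintype V] (G : SimpleGraph V) : ℝ :=
  sSup {μ : ℝ | ∃ z : V → ℝ, z ≠ 0 ∧ adjMat G *ᵥ z = μ • z}

/-- The smallest adjacency eigenvalue. -/
noncomputable def lamMin {V : Type*} [Fintype V] (G : SimpleGraph V) : ℝ :=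
  sInf {μ : ℝ | ∃ z : V → ℝ, z ≠ 0 ∧ adjMat G *ᵥ z = μ • z}

/-- The spread of a graph: difference of extreme adjacency eigenvalues. -/
noncomputable def spread {V : Type*} [Fintype V] (G : SimpleGraph V) : ℝ :=
  lamMax G - lamMin G

/-- The join `G ∨ H` of two graphs. -/
def gJoin {α β : Type*} (G : SimpleGraph α) (H : SimpleGraph β) : SimpleGraph (α ⊕ β) where
  Adj x y :=
    match x, y with
    | Sum.inl a, Sum.inl a' => G.Adj a a'
    | Sum.inl _, Sum.inr _ => True
    | Sum.inr _, Sum.inl _ => True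
    | Sum.inr b, Sum.inr b' => H.Adj b b'
  symm := ⟨by rintro (a | b) (a' | b') h <;> simp_all <;> exact h.symm⟩
  loopless := ⟨by rintro (a | b) h <;> simp_all⟩

/-- The disjoint union of two graphs. -/
def gSum {α β : Type*} (G : SimpleGraph α) (H : SimpleGraph β) : SimpleGraph (α ⊕ β) where
  Adj x y :=
    match x, y with
    | Sum.inl a, Sum.inl a' => G.Adj a a'
    | Sum.inr b, Sum.inr b' => H.Adj b b'
    | _, _ => False
  symm := ⟨by rintro (a | b) (a' | b') h <;> simp_all <;> exact h.symm⟩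
  loopless := ⟨by rintro (a | b) h <;> simp_all⟩

/-- The disjoint union of `ℓ` copies of the complete graph `K_t`. -/
def cliques (ℓ t : ℕ) : SimpleGraph (Fin ℓ × Fin t) where
  Adj x y := x.1 = y.1 ∧ x.2 ≠ y.2
  symm := ⟨fun _ _ ⟨h1, h2⟩ => ⟨h1.symm, h2.symm⟩⟩
  loopless := ⟨fun _ ⟨_, h⟩ => h rfl⟩

/-- The graph `K_1 ∨ (ℓ K_t ∪ m P_1)`. -/
def GExt (t ℓ m : ℕ) : SimpleGraph (Fin 1 ⊕ ((Fin ℓ × Fin t) ⊕ Fin m)) :=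
  gJoin (⊤ : SimpleGraph (Fin 1)) (gSum (cliques ℓ t) (⊥ : SimpleGraph (Fin m)))

/-- The constant `ξ_t` from the paper. -/
noncomputable def xiConst (t : ℕ) : ℤ :=
  if Even t then 2 * ⌊3 * (t : ℚ) / 4 - 1 - ((t : ℚ) - 1) ^ 2 / 9⌋
  else ⌊3 * (t : ℚ) / 2 - 2 - 2 * ((t : ℚ) - 1) ^ 2 / 9⌋

/-- `ℓ₀ = ⌊(2n + ξ_t)/(3t)⌋`. -/
noncomputable def ell0 (t n : ℕ) : ℕ :=
  (⌊(2 * (n : ℚ) + (xiConst t : ℚ)) / (3 * (t : ℚ))⌋).toNat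

/-!
The spectrum of `K_1 ∨ (ℓ K_t ∪ m P_1)` consists of `0`, `-1`, `t - 1` and the roots of the cubic
`p(x) = x³ - (t-1)x² - (ℓt+m)x + m(t-1)` of its equitable quotient. For `ℓ ≥ 1` and `t ≥ 2` the
cubic has a root above `t - 1` and one at most `-1`, so the spread is the distance between its
extreme roots. Passing from `(ℓ₀, m)` to `(ℓ₀ - 1, m + t)` keeps `ℓt + m = n - 1` and raises the
constant term by `t(t-1)`; for the exceptional `n` the new cubic is `x ↦ -p(2(t-1)/3 - x)`, so its
roots are the old ones reflected and the spread is unchanged.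
-/

def adjEigenvalues {V : Type*} [Fintype V] (G : SimpleGraph V) : Set ℝ :=
  {μ : ℝ | ∃ z : V → ℝ, z ≠ 0 ∧ adjMat G *ᵥ z = μ • z}

lemma lamMax_eq_of_isGreatest {V : Type*} [Fintype V] {G : SimpleGraph V} {r : ℝ}
    (h : IsGreatest (adjEigenvalues G) r) : lamMax G = r :=
  h.csSup_eq

lemma lamMin_eq_of_isLeast {V : Type*} [Fintype V] {G : SimpleGraph V} {s : ℝ}
    (h : IsLeast (adjEigenvalues G) s) : lamMin G = s :=
  h.csInf_eq

lemma exists_isLeast_of_finite {s : Set ℝ} (hs : s.Finite) (hne : s.Nonempty) :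
    ∃ r, IsLeast s r :=
  ⟨sInf s, hne.csInf_mem hs, fun _ hx => csInf_le hs.bddBelow hx⟩

lemma exists_isGreatest_of_finite {s : Set ℝ} (hs : s.Finite) (hne : s.Nonempty) :
    ∃ r, IsGreatest s r :=
  ⟨sSup s, hne.csSup_mem hs, fun _ hx => le_csSup hs.bddAbove hx⟩

section reflect

variable {f g : ℝ → ℝ} {a : ℝ}

lemma isLeast_setOf_eq_zero_of_reflect (hfg : ∀ x, g x = -f (a - x)) {r : ℝ}
    (hr : IsGreatest {x | f x = 0} r) : IsLeast {x | g x = 0} (a - r) :=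
  ⟨by simp [hfg, hr.1.out], fun x hx => by
    have := hr.2 (show f (a - x) = 0 by simpa [hfg] using hx)
    linarith⟩

lemma isGreatest_setOf_eq_zero_of_reflect (hfg : ∀ x, g x = -f (a - x)) {s : ℝ}
    (hs : IsLeast {x | f x = 0} s) : IsGreatest {x | g x = 0} (a - s) :=
  ⟨by simp [hfg, hs.1.out], fun x hx => by
    have := hs.2 (show f (a - x) = 0 by simpa [hfg] using hx)
    linarith⟩

end reflect

/-- The characteristic polynomial of the equitable quotient matrix
`!![0, ℓt, m; 1, t-1, 0; 1, 0, 0]` of `GExt t ℓ m` (centre, clique vertices, pendant vertices). -/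
noncomputable def quotientCubic (t ℓ m : ℕ) (x : ℝ) : ℝ :=
  x ^ 3 - ((t : ℝ) - 1) * x ^ 2 - ((ℓ : ℝ) * t + m) * x + m * ((t : ℝ) - 1)

section quotientCubic

variable (t ℓ m : ℕ)

lemma continuous_quotientCubic : Continuous (quotientCubic t ℓ m) := by
  unfold quotientCubic
  fun_prop

lemma finite_setOf_quotientCubic_eq_zero :
    {x | quotientCubic t ℓ m x = 0}.Finite := by
  open Polynomial in
  let p : ℝ[X] :=
    X ^ 3 - C ((t : ℝ) - 1) * X ^ 2 - C ((ℓ : ℝ) * t + m) * X + C (m * ((t : ℝ) - 1))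
  have hp : p ≠ 0 := Monic.ne_zero (by simp only [p]; monicity!)
  refine (finite_setOfPred_isRoot hp).subset fun x hx => ?_
  simpa [p, quotientCubic] using hx

variable {t ℓ m}

lemma exists_quotientCubic_eq_zero_gt (ht : 2 ≤ t) (hℓ : 1 ≤ ℓ) :
    ∃ x, quotientCubic t ℓ m x = 0 ∧ (t : ℝ) - 1 < x := by
  have ht' : (2 : ℝ) ≤ t := by exact_mod_cast ht
  have hℓ' : (1 : ℝ) ≤ ℓ := by exact_mod_cast hℓ
  have hs : (0 : ℝ) ≤ ℓ * t + m := by positivity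
  have hM : (t : ℝ) - 1 ≤ ℓ * t + m + t := by linarith
  have hlow : quotientCubic t ℓ m (t - 1) < 0 := by
    unfold quotientCubic; nlinarith
  have hhigh : 0 ≤ quotientCubic t ℓ m (ℓ * t + m + t) := by
    have : quotientCubic t ℓ m (ℓ * t + m + t) = (ℓ * t + m + t) *
        ((ℓ * t + m) * (ℓ * t + m + t) + t) + m * (t - 1) := by
      unfold quotientCubic; ring
    rw [this]
    have : (0 : ℝ) ≤ m * (t - 1) := mul_nonneg (by positivity) (by linarith)
    positivity
  obtain ⟨x, ⟨hx, -⟩, hx0⟩ :=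
    intermediate_value_Ioc hM (continuous_quotientCubic t ℓ m).continuousOn ⟨hlow, hhigh⟩
  exact ⟨x, hx0, hx⟩

lemma exists_quotientCubic_eq_zero_le (hℓ : 1 ≤ ℓ) :
    ∃ x, quotientCubic t ℓ m x = 0 ∧ x ≤ -1 := by
  have hℓ' : (1 : ℝ) ≤ ℓ := by exact_mod_cast hℓ
  have hs : (0 : ℝ) ≤ ℓ * t + m := by positivity
  have hM : -((ℓ : ℝ) * t + m + 1) ≤ -1 := by linarith
  have hlow : quotientCubic t ℓ m (-(ℓ * t + m + 1)) ≤ 0 := by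
    have : quotientCubic t ℓ m (-(ℓ * t + m + 1)) = -((ℓ * t + m + 1) * (ℓ * t + m) ^ 2 +
        t * ((ℓ * t + m + 1) ^ 2 - m) + m) := by
      unfold quotientCubic; ring
    rw [this, neg_nonpos]
    have : (m : ℝ) ≤ (ℓ * t + m + 1) ^ 2 := by nlinarith
    have : (0 : ℝ) ≤ (ℓ * t + m + 1) ^ 2 - m := by linarith
    positivity
  have hhigh : 0 ≤ quotientCubic t ℓ m (-1) := by
    have : quotientCubic t ℓ m (-1) = t * ((ℓ - 1) + m) := by
      unfold quotientCubic; ring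
    rw [this]
    have : (0 : ℝ) ≤ ℓ - 1 := by linarith
    positivity
  obtain ⟨x, ⟨-, hx⟩, hx0⟩ :=
    intermediate_value_Icc hM (continuous_quotientCubic t ℓ m).continuousOn ⟨hlow, hhigh⟩
  exact ⟨x, hx0, hx⟩

lemma quotientCubic_reflect {ℓ' m' : ℕ} (hs : (ℓ' : ℝ) * t + m' = ℓ * t + m)
    (hm : 27 * ((m : ℝ) + m') = 4 * ((t : ℝ) - 1) ^ 2 + 18 * (ℓ * t + m)) (x : ℝ) :
    quotientCubic t ℓ' m' x = -quotientCubic t ℓ m (2 * (t - 1) / 3 - x) := by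
  unfold quotientCubic
  linear_combination (-x) * hs + ((t : ℝ) - 1) / 27 * hm

end quotientCubic

namespace GExt

variable {t ℓ m : ℕ}

section mulVec

variable (z : Fin 1 ⊕ ((Fin ℓ × Fin t) ⊕ Fin m) → ℝ)

lemma adjMat_mulVec_center :
    (adjMat (GExt t ℓ m) *ᵥ z) (Sum.inl 0) =
      ∑ i, ∑ j, z (Sum.inr (Sum.inl (i, j))) + ∑ q, z (Sum.inr (Sum.inr q)) := by
  simp [adjMat, mulVec, dotProduct, GExt, gJoin, gSum, Fintype.sum_sum_type,
    Fintype.sum_prod_type]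

lemma adjMat_mulVec_clique (i : Fin ℓ) (j : Fin t) :
    (adjMat (GExt t ℓ m) *ᵥ z) (Sum.inr (Sum.inl (i, j))) =
      z (Sum.inl 0) + ∑ j', z (Sum.inr (Sum.inl (i, j'))) - z (Sum.inr (Sum.inl (i, j))) := by
  simp [adjMat, mulVec, dotProduct, GExt, gJoin, gSum, cliques, Fintype.sum_sum_type,
    Fintype.sum_prod_type]
  rw [Fintype.sum_eq_single i fun i' hi' => by simp [Ne.symm hi']]
  simp [← ne_eq, Finset.sum_ite, Finset.filter_ne, Finset.sum_erase_eq_sub]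
  ring

lemma adjMat_mulVec_pendant (q : Fin m) :
    (adjMat (GExt t ℓ m) *ᵥ z) (Sum.inr (Sum.inr q)) = z (Sum.inl 0) := by
  simp [adjMat, mulVec, dotProduct, GExt, gJoin, gSum, Fintype.sum_sum_type]

end mulVec

variable {μ : ℝ}

lemma mem_adjEigenvalues_of_quotientCubic_eq_zero (h0 : μ ≠ 0) (ht : μ ≠ t - 1)
    (hμ : quotientCubic t ℓ m μ = 0) : μ ∈ adjEigenvalues (GExt t ℓ m) := by
  have ht' : μ + 1 - t ≠ 0 := fun h => ht (by linarith)
  refine ⟨Sum.elim (fun _ => μ * (μ + 1 - t)) (Sum.elim (fun _ => μ) fun _ => μ + 1 - t),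
    fun hz => mul_ne_zero h0 ht' (congrFun hz (Sum.inl 0)), ?_⟩
  funext v
  rcases v with v | ⟨i, j⟩ | q
  · obtain rfl := Subsingleton.elim v 0
    simp only [adjMat_mulVec_center, Sum.elim_inl, Sum.elim_inr, Finset.sum_const,
      Finset.card_univ, Fintype.card_fin, nsmul_eq_mul, Pi.smul_apply, smul_eq_mul]
    unfold quotientCubic at hμ
    linear_combination -hμ
  · simp only [adjMat_mulVec_clique, Sum.elim_inl, Sum.elim_inr, Finset.sum_const,
      Finset.card_univ, Fintype.card_fin, nsmul_eq_mul, Pi.smul_apply, smul_eq_mul]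
    ring
  · simp only [adjMat_mulVec_pendant, Sum.elim_inl, Sum.elim_inr, Pi.smul_apply, smul_eq_mul]

lemma quotientCubic_eq_zero_of_mem_adjEigenvalues (hμ : μ ∈ adjEigenvalues (GExt t ℓ m))
    (h0 : μ ≠ 0) (h1 : μ ≠ -1) (ht : μ ≠ t - 1) : quotientCubic t ℓ m μ = 0 := by
  obtain ⟨z, hz, hzμ⟩ := hμ
  have h1' : μ + 1 ≠ 0 := fun h => h1 (by linarith)
  have ht' : μ + 1 - t ≠ 0 := fun h => ht (by linarith)
  set c := z (Sum.inl 0)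
  have hpendant (q : Fin m) : μ * z (Sum.inr (Sum.inr q)) = c := by
    simpa [adjMat_mulVec_pendant] using (congrFun hzμ (Sum.inr (Sum.inr q))).symm
  have hclique (i : Fin ℓ) (j : Fin t) :
      (μ + 1) * z (Sum.inr (Sum.inl (i, j))) = c + ∑ j', z (Sum.inr (Sum.inl (i, j'))) := by
    have := congrFun hzμ (Sum.inr (Sum.inl (i, j)))
    simp only [adjMat_mulVec_clique, Pi.smul_apply, smul_eq_mul] at this
    linear_combination -this
  have hcliqueSum (i : Fin ℓ) : (μ + 1 - t) * ∑ j, z (Sum.inr (Sum.inl (i, j))) = t * c := by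
    have := Finset.sum_congr rfl fun j (_ : j ∈ Finset.univ) => hclique i j
    simp only [← Finset.mul_sum, Finset.sum_const, Finset.card_univ, Fintype.card_fin,
      nsmul_eq_mul] at this
    linear_combination this
  have hcliqueTotal : (μ + 1 - t) * ∑ i, ∑ j, z (Sum.inr (Sum.inl (i, j))) = ℓ * (t * c) := by
    rw [Finset.mul_sum]; simp [hcliqueSum]
  have hpendantTotal : μ * ∑ q, z (Sum.inr (Sum.inr q)) = m * c := by
    simp [Finset.mul_sum, hpendant]
  have hcenter := congrFun hzμ (Sum.inl 0)
  simp only [adjMat_mulVec_center, Pi.smul_apply, smul_eq_mul] at hcenter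
  have hc : c * quotientCubic t ℓ m μ = 0 := by
    unfold quotientCubic
    linear_combination
      -(μ * (μ + 1 - t)) * hcenter + μ * hcliqueTotal + (μ + 1 - t) * hpendantTotal
  refine (mul_eq_zero.mp hc).resolve_left fun hc0 => hz ?_
  funext v
  rcases v with v | ⟨i, j⟩ | q
  · exact (Subsingleton.elim v 0) ▸ hc0
  · have hS : ∑ j', z (Sum.inr (Sum.inl (i, j'))) = 0 := by
      simpa [hc0, ht'] using hcliqueSum i
    simpa [hc0, hS, h1'] using hclique i j
  · simpa [hc0, h0] using hpendant q

lemma adjEigenvalues_subset :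
    adjEigenvalues (GExt t ℓ m) ⊆ {x | quotientCubic t ℓ m x = 0} ∪ {0, -1, (t : ℝ) - 1} := by
  intro μ hμ
  by_cases hμ' : μ = 0 ∨ μ = -1 ∨ μ = t - 1
  · exact Or.inr hμ'
  push Not at hμ'
  exact Or.inl (quotientCubic_eq_zero_of_mem_adjEigenvalues hμ hμ'.1 hμ'.2.1 hμ'.2.2)

lemma isGreatest_adjEigenvalues (ht : 2 ≤ t) (hℓ : 1 ≤ ℓ) {r : ℝ}
    (hr : IsGreatest {x | quotientCubic t ℓ m x = 0} r) :
    IsGreatest (adjEigenvalues (GExt t ℓ m)) r := by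
  obtain ⟨x, hx, hxt⟩ := exists_quotientCubic_eq_zero_gt (m := m) ht hℓ
  have hrt : (t : ℝ) - 1 < r := hxt.trans_le (hr.2 hx)
  have ht' : (2 : ℝ) ≤ t := by exact_mod_cast ht
  refine ⟨mem_adjEigenvalues_of_quotientCubic_eq_zero (by linarith) hrt.ne' hr.1, fun μ hμ => ?_⟩
  rcases adjEigenvalues_subset hμ with hroot | rfl | rfl | rfl
  exacts [hr.2 hroot, by linarith, by linarith, hrt.le]

lemma isLeast_adjEigenvalues (ht : 2 ≤ t) (hℓ : 1 ≤ ℓ) {s : ℝ}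
    (hs : IsLeast {x | quotientCubic t ℓ m x = 0} s) :
    IsLeast (adjEigenvalues (GExt t ℓ m)) s := by
  obtain ⟨x, hx, hx1⟩ := exists_quotientCubic_eq_zero_le (t := t) (m := m) hℓ
  have hs1 : s ≤ -1 := (hs.2 hx).trans hx1
  have ht' : (2 : ℝ) ≤ t := by exact_mod_cast ht
  refine ⟨mem_adjEigenvalues_of_quotientCubic_eq_zero (by linarith) (by linarith) hs.1,
    fun μ hμ => ?_⟩
  rcases adjEigenvalues_subset hμ with hroot | rfl | rfl | rfl
  exacts [hs.2 hroot, by linarith, hs1, by linarith]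

lemma spread_eq (ht : 2 ≤ t) (hℓ : 1 ≤ ℓ) {r s : ℝ}
    (hr : IsGreatest {x | quotientCubic t ℓ m x = 0} r)
    (hs : IsLeast {x | quotientCubic t ℓ m x = 0} s) :
    spread (GExt t ℓ m) = r - s := by
  rw [spread, lamMax_eq_of_isGreatest (isGreatest_adjEigenvalues ht hℓ hr),
    lamMin_eq_of_isLeast (isLeast_adjEigenvalues ht hℓ hs)]

lemma spread_eq_of_reflect {ℓ' m' : ℕ} (ht : 2 ≤ t) (hℓ : 1 ≤ ℓ) (hℓ' : 1 ≤ ℓ')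
    {a : ℝ} (hreflect : ∀ x, quotientCubic t ℓ' m' x = -quotientCubic t ℓ m (a - x)) :
    spread (GExt t ℓ m) = spread (GExt t ℓ' m') := by
  have hne : {x | quotientCubic t ℓ m x = 0}.Nonempty :=
    let ⟨x, hx, _⟩ := exists_quotientCubic_eq_zero_le (t := t) (m := m) hℓ; ⟨x, hx⟩
  obtain ⟨r, hr⟩ := exists_isGreatest_of_finite (finite_setOf_quotientCubic_eq_zero t ℓ m) hne
  obtain ⟨s, hs⟩ := exists_isLeast_of_finite (finite_setOf_quotientCubic_eq_zero t ℓ m) hne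
  rw [spread_eq ht hℓ hr hs, spread_eq ht hℓ'
    (isGreatest_setOf_eq_zero_of_reflect hreflect hs)
    (isLeast_setOf_eq_zero_of_reflect hreflect hr)]
  ring

end GExt

/-- In the exceptional case `t = 12k+4`, `n = 6(3k+1)ℓ₀ + 16k² − k − 1`,
the two candidate extremal graphs have equal spread. -/
theorem exceptional_case_equal_spread (k : ℕ) :
    ∃ N : ℕ, ∀ (ℓ0 n : ℕ), 1 ≤ ℓ0 →
      (n : ℤ) = 6 * (3 * (k : ℤ) + 1) * ℓ0 + 16 * (k : ℤ) ^ 2 - k - 1 → N ≤ n →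
      spread (GExt (12 * k + 4) ℓ0 (n - 1 - ℓ0 * (12 * k + 4))) =
        spread (GExt (12 * k + 4) (ℓ0 - 1) (n - 1 - (ℓ0 - 1) * (12 * k + 4))) := by
  refine ⟨16 * k ^ 2 + 17 * k + 6, fun ℓ0 n _ hn hN => ?_⟩
  have hN' : (16 * k ^ 2 + 17 * k + 6 : ℤ) ≤ n := by exact_mod_cast hN
  have hℓ0 : 2 ≤ ℓ0 := by
    by_contra! h
    have : (ℓ0 : ℤ) ≤ 1 := by omega
    nlinarith
  have hn' : ℓ0 * (12 * k + 4) + 1 ≤ n := by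
    zify
    nlinarith
  have hsub : (ℓ0 - 1) * (12 * k + 4) ≤ ℓ0 * (12 * k + 4) :=
    Nat.mul_le_mul_right _ (Nat.sub_le ℓ0 1)
  have hnR : (n : ℝ) = 6 * (3 * k + 1) * ℓ0 + 16 * k ^ 2 - k - 1 := by exact_mod_cast hn
  refine GExt.spread_eq_of_reflect (by omega) (by omega) (by omega)
    (quotientCubic_reflect ?_ ?_) <;>
  push_cast [Nat.cast_sub (by omega : 1 ≤ n), Nat.cast_sub (by omega : 1 ≤ ℓ0),
    Nat.cast_sub (by omega : ℓ0 * (12 * k + 4) ≤ n - 1),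
    Nat.cast_sub (by omega : (ℓ0 - 1) * (12 * k + 4) ≤ n - 1)]
  · ring
  · linear_combination 36 * hnR
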